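/- arXiv:2408.10475 — 2 statements merged into one kernel-verified Lean document; each statement's English description precedes it below -/
import Mathlib

section
/- Let n ≥ 1, let A_1, …, A_p and B_1, …, B_q be Hermitian U(1)-invariant complex matrices such that the ordered products of matrix exponentials agree: Matrix.exp(-i·A_1)·…·Matrix.exp(-i·A_p) = Matrix.exp(-i·B_1)·…·Matrix.exp(-i·B_q). Then for every function c : {0,…,n} → ℤ, setting C := Σ_{m=0}^{n} c(m)·Π_m, the real traces satisfy Σ_{j=1}^{p} Tr(A_j·C) ≡ Σ_{j=1}^{q} Tr(B_j·C) (mod 2π). -/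
open Finset Matrix

noncomputable section

/-- Hamming weight of a basis label. -/
def hw {n : ℕ} (z : Fin n → Bool) : ℕ := (Finset.univ.filter fun i => z i = true).card

/-- A matrix is U(1)-invariant if it vanishes off the Hamming-weight blocks. -/
def U1Invariant {n : ℕ} (M : Matrix (Fin n → Bool) (Fin n → Bool) ℂ) : Prop :=
  ∀ z z', hw z ≠ hw z' → M z z' = 0

/-- The projector `Π_m` onto the Hamming-weight-`m` sector. -/
def Pimat (n m : ℕ) : Matrix (Fin n → Bool) (Fin n → Bool) ℂ :=
  Matrix.diagonal fun z => if hw z = m then 1 else 0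

/-- `x ≡ y (mod 2π)`. -/
def Mod2Pi (x y : ℝ) : Prop := ∃ j : ℤ, x - y = 2 * Real.pi * j

/-! U(1)-invariant matrices are block diagonal with respect to the Hamming weight, so the identity
between the products of exponentials holds on each weight-`m` block separately. Taking determinants
there and using `det (exp (-i H)) = exp (-i Tr H)` for Hermitian `H` gives
`∑ⱼ Trₘ Aⱼ ≡ ∑ⱼ Trₘ Bⱼ (mod 2π)`, where `Trₘ` is the trace of the weight-`m` block. Since
`Tr (A C) = ∑ₘ c(m) Trₘ A` and the `c(m)` are integers, the claim is an integer combination of these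
congruences, which we compute in `Real.Angle`. -/

namespace Matrix

section Blocks

variable {ι κ R : Type*} {b : ι → κ}

def IsBlockDiagonal [Zero R] (M : Matrix ι ι R) (b : ι → κ) : Prop :=
  ∀ ⦃i j⦄, b i ≠ b j → M i j = 0

theorem IsBlockDiagonal.smul {S : Type*} [Zero R] [SMulZeroClass S R] {M : Matrix ι ι R}
    (hM : M.IsBlockDiagonal b) (a : S) : (a • M).IsBlockDiagonal b := fun i j hij => by
  rw [smul_apply, hM hij, smul_zero]

variable [DecidableEq κ] [Zero R]

theorem IsBlockDiagonal.reindex_sigmaFiberEquiv {M : Matrix ι ι R} (hM : M.IsBlockDiagonal b) :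
    reindex (Equiv.sigmaFiberEquiv b).symm (Equiv.sigmaFiberEquiv b).symm M
      = blockDiagonal' (M.toSquareBlock b) := by
  ext ⟨k, i⟩ ⟨k', j⟩
  rcases eq_or_ne k k' with rfl | hne
  · simp [blockDiagonal'_apply_eq, toSquareBlock_def]
  · rw [blockDiagonal'_apply_ne _ _ _ hne]
    exact hM (show b i ≠ b j by rwa [i.2, j.2])

theorem toSquareBlock_eq_of_reindex_eq_blockDiagonal' {M : Matrix ι ι R}
    {v : ∀ k, Matrix {i // b i = k} {i // b i = k} R}
    (h : reindex (Equiv.sigmaFiberEquiv b).symm (Equiv.sigmaFiberEquiv b).symm M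
      = blockDiagonal' v) (k : κ) :
    M.toSquareBlock b k = v k := by
  ext i j
  simpa [blockDiagonal'_apply_eq, toSquareBlock_def] using congrFun (congrFun h ⟨k, i⟩) ⟨k, j⟩

end Blocks

section Exp

open scoped Norms.Operator

variable {m n ι κ : Type*} [Fintype m] [DecidableEq m] [Fintype n] [DecidableEq n]
  [Fintype ι] [DecidableEq ι] [Fintype κ] [DecidableEq κ]

theorem exp_reindex (e : m ≃ n) (A : Matrix m m ℂ) :
    NormedSpace.exp (reindex e e A) = reindex e e (NormedSpace.exp A) :=
  (NormedSpace.map_exp (reindexAlgEquiv ℂ ℂ e) (continuous_id.matrix_reindex e e) A).symm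

theorem IsBlockDiagonal.reindex_exp {b : ι → κ} {M : Matrix ι ι ℂ} (hM : M.IsBlockDiagonal b) :
    reindex (Equiv.sigmaFiberEquiv b).symm (Equiv.sigmaFiberEquiv b).symm (NormedSpace.exp M)
      = blockDiagonal' fun k => NormedSpace.exp (M.toSquareBlock b k) := by
  rw [← exp_reindex, hM.reindex_sigmaFiberEquiv, exp_blockDiagonal']
  exact congrArg blockDiagonal' (funext fun k => Pi.coe_exp _ k)

theorem toSquareBlock_prod_map_exp {b : ι → κ} {L : List (Matrix ι ι ℂ)}
    (hL : ∀ M ∈ L, M.IsBlockDiagonal b) (k : κ) :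
    ((L.map NormedSpace.exp).prod).toSquareBlock b k
      = (L.map fun M => NormedSpace.exp (M.toSquareBlock b k)).prod := by
  refine toSquareBlock_eq_of_reindex_eq_blockDiagonal'
    (v := fun k => (L.map fun M => NormedSpace.exp (M.toSquareBlock b k)).prod) ?_ k
  induction L with
  | nil =>
    simp only [List.map_nil, List.prod_nil, reindex_apply, submatrix_one_equiv]
    exact blockDiagonal'_one.symm
  | cons M L ih =>
    rw [List.forall_mem_cons] at hL
    rw [List.map_cons, List.prod_cons, ← coe_reindexAlgEquiv ℂ ℂ, map_mul, coe_reindexAlgEquiv,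
      hL.1.reindex_exp, ih hL.2, ← blockDiagonal'_mul]
    rfl

theorem toSquareBlock_prod_ofFn_exp_smul {b : ι → κ} {r : ℕ} {H : Fin r → Matrix ι ι ℂ}
    (hH : ∀ j, (H j).IsBlockDiagonal b) (a : ℂ) (k : κ) :
    (List.ofFn fun j => NormedSpace.exp (a • H j)).prod.toSquareBlock b k
      = (List.ofFn fun j => NormedSpace.exp (a • (H j).toSquareBlock b k)).prod := by
  have hL : ∀ M ∈ List.ofFn fun j => a • H j, M.IsBlockDiagonal b := by
    simpa [List.mem_ofFn] using fun j => (hH j).smul a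
  have h := toSquareBlock_prod_map_exp hL k
  simp only [List.map_ofFn, Function.comp_def] at h
  exact h

end Exp

theorem IsHermitian.det_exp_smul {ι : Type*} [Fintype ι] [DecidableEq ι] {H : Matrix ι ι ℂ}
    (hH : H.IsHermitian) (a : ℂ) :
    (NormedSpace.exp (a • H)).det = Complex.exp (a * H.trace) := by
  let U : (Matrix ι ι ℂ)ˣ := Unitary.toUnits hH.eigenvectorUnitary
  have hdiag : a • H = U * diagonal (fun i => a * hH.eigenvalues i) * (U⁻¹ : (Matrix ι ι ℂ)ˣ) := by
    conv_lhs => rw [hH.spectral_theorem, Unitary.conjStarAlgAut_apply]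
    rw [← smul_mul_assoc, ← mul_smul_comm, ← diagonal_smul]
    rfl
  rw [hdiag, exp_units_conj, det_units_conj, exp_diagonal, det_diagonal,
    hH.trace_eq_sum_eigenvalues, Finset.mul_sum, Complex.exp_sum]
  simp [Complex.exp_eq_exp_ℂ]

theorem IsHermitian.coe_re_trace {ι : Type*} [Fintype ι] {H : Matrix ι ι ℂ}
    (hH : H.IsHermitian) : ((H.trace.re : ℝ) : ℂ) = H.trace :=
  Complex.conj_eq_iff_re.mp ((trace_conjTranspose H).symm.trans (congrArg trace hH.eq))

theorem trace_mul_diagonal_comp {ι κ R : Type*} [Fintype ι] [DecidableEq ι] [Fintype κ]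
    [DecidableEq κ] [CommSemiring R] (M : Matrix ι ι R) (b : ι → κ) (f : κ → R) :
    trace (M * diagonal fun i => f (b i)) = ∑ k, f k * trace (M.toSquareBlock b k) := by
  simp only [trace, diag, mul_diagonal, toSquareBlock_def, of_apply, Finset.mul_sum]
  rw [← Fintype.sum_fiberwise b]
  refine Finset.sum_congr rfl fun k _ => Finset.sum_congr rfl fun i _ => ?_
  rw [i.2, mul_comm]

end Matrix

open Matrix

theorem Real.Angle.coe_eq_coe_of_exp_neg_I_mul_eq {x y : ℝ}
    (h : Complex.exp (-Complex.I * x) = Complex.exp (-Complex.I * y)) : (x : Real.Angle) = y := by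
  have hcirc : Circle.exp (-x) = Circle.exp (-y) := by
    ext
    simp only [Circle.coe_exp, Complex.ofReal_neg]
    convert h using 2 <;> ring
  obtain ⟨m, hm⟩ := Circle.exp_eq_exp.1 hcirc
  exact Real.Angle.angle_eq_iff_two_pi_dvd_sub.2 ⟨-m, by push_cast; linarith⟩

theorem Real.Angle.coe_sum_intCast_mul {κ : Type*} [Fintype κ] (f : κ → ℤ) (x : κ → ℝ) :
    ((∑ k, (f k : ℝ) * x k : ℝ) : Real.Angle) = ∑ k, f k • (x k : Real.Angle) := by
  simp_rw [← Real.Angle.coe_zsmul, zsmul_eq_mul]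
  exact map_sum Real.Angle.coeHom _ _

section Phases

variable {ι : Type*} [Fintype ι] [DecidableEq ι]

theorem det_prod_ofFn_exp_neg_I_smul {r : ℕ} {H : Fin r → Matrix ι ι ℂ}
    (hH : ∀ j, (H j).IsHermitian) :
    (List.ofFn fun j => NormedSpace.exp ((-Complex.I) • H j)).prod.det
      = Complex.exp (-Complex.I * ↑(∑ j, (H j).trace.re)) := by
  rw [← coe_detMonoidHom, map_list_prod, List.map_ofFn, List.prod_ofFn]
  simp only [Function.comp_apply, coe_detMonoidHom, (hH _).det_exp_smul]
  push_cast
  simp only [(hH _).coe_re_trace, Finset.mul_sum, Complex.exp_sum]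

theorem angle_sum_re_trace_eq_of_prod_exp_eq {p q : ℕ}
    {A : Fin p → Matrix ι ι ℂ} {B : Fin q → Matrix ι ι ℂ}
    (hA : ∀ j, (A j).IsHermitian) (hB : ∀ j, (B j).IsHermitian)
    (hprod : (List.ofFn fun j => NormedSpace.exp ((-Complex.I) • A j)).prod
           = (List.ofFn fun j => NormedSpace.exp ((-Complex.I) • B j)).prod) :
    ((∑ j, (A j).trace.re : ℝ) : Real.Angle) = (∑ j, (B j).trace.re : ℝ) := by
  apply Real.Angle.coe_eq_coe_of_exp_neg_I_mul_eq
  rw [← det_prod_ofFn_exp_neg_I_smul hA, ← det_prod_ofFn_exp_neg_I_smul hB, hprod]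

end Phases

theorem angle_sum_re_trace_mul_diagonal_eq {ι κ : Type*} [Fintype ι] [DecidableEq ι] [Fintype κ]
    [DecidableEq κ] {b : ι → κ} {p q : ℕ} {A : Fin p → Matrix ι ι ℂ} {B : Fin q → Matrix ι ι ℂ}
    (hAherm : ∀ j, (A j).IsHermitian) (hAblock : ∀ j, (A j).IsBlockDiagonal b)
    (hBherm : ∀ j, (B j).IsHermitian) (hBblock : ∀ j, (B j).IsBlockDiagonal b)
    (hprod : (List.ofFn fun j => NormedSpace.exp ((-Complex.I) • A j)).prod
           = (List.ofFn fun j => NormedSpace.exp ((-Complex.I) • B j)).prod)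
    (f : κ → ℤ) :
    ((∑ j, (trace (A j * diagonal fun i => (f (b i) : ℂ))).re : ℝ) : Real.Angle)
      = (∑ j, (trace (B j * diagonal fun i => (f (b i) : ℂ))).re : ℝ) := by
  have hphase : ∀ k, ((∑ j, ((A j).toSquareBlock b k).trace.re : ℝ) : Real.Angle)
      = (∑ j, ((B j).toSquareBlock b k).trace.re : ℝ) := fun k => by
    refine angle_sum_re_trace_eq_of_prod_exp_eq (fun j => (hAherm j).submatrix _)
      (fun j => (hBherm j).submatrix _) ?_
    rw [← toSquareBlock_prod_ofFn_exp_smul hAblock, ← toSquareBlock_prod_ofFn_exp_smul hBblock,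
      hprod]
  have hsplit : ∀ H : Matrix ι ι ℂ, (trace (H * diagonal fun i => (f (b i) : ℂ))).re
      = ∑ k, (f k : ℝ) * (H.toSquareBlock b k).trace.re := fun H => by
    rw [trace_mul_diagonal_comp H b (fun k => (f k : ℂ)), Complex.re_sum]
    simp
  simp only [hsplit]
  rw [Finset.sum_comm, Finset.sum_comm (s := Finset.univ (α := Fin q))]
  simp only [← Finset.mul_sum]
  rw [Real.Angle.coe_sum_intCast_mul, Real.Angle.coe_sum_intCast_mul]
  simp only [hphase]

theorem hw_le {n : ℕ} (z : Fin n → Bool) : hw z ≤ n :=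
  (card_filter_le _ _).trans_eq (card_fin n)

def weight {n : ℕ} (z : Fin n → Bool) : Fin (n + 1) :=
  ⟨hw z, Nat.lt_succ_of_le (hw_le z)⟩

theorem U1Invariant.isBlockDiagonal {n : ℕ} {M : Matrix (Fin n → Bool) (Fin n → Bool) ℂ}
    (hM : U1Invariant M) : M.IsBlockDiagonal weight :=
  fun _ _ h => hM _ _ fun h' => h (Fin.ext h')

theorem sum_smul_Pimat (n : ℕ) (c : ℕ → ℂ) :
    ∑ m ∈ range (n + 1), c m • Pimat n m = diagonal fun z => c (hw z) := by
  ext z z'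
  rcases eq_or_ne z z' with rfl | h
  · simp [Pimat, Matrix.sum_apply, Nat.lt_succ_of_le (hw_le z)]
  · simp [Pimat, Matrix.sum_apply, h]

theorem stmt13_general (n : ℕ) (p q : ℕ)
    (A : Fin p → Matrix (Fin n → Bool) (Fin n → Bool) ℂ)
    (B : Fin q → Matrix (Fin n → Bool) (Fin n → Bool) ℂ)
    (hAherm : ∀ j, (A j).IsHermitian) (hAU1 : ∀ j, U1Invariant (A j))
    (hBherm : ∀ j, (B j).IsHermitian) (hBU1 : ∀ j, U1Invariant (B j))
    (hprod : (List.ofFn fun j => NormedSpace.exp ((-Complex.I) • A j)).prod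
           = (List.ofFn fun j => NormedSpace.exp ((-Complex.I) • B j)).prod)
    (c : ℕ → ℤ) :
    Mod2Pi
      (∑ j, (Matrix.trace (A j * ∑ m ∈ Finset.range (n+1), (c m : ℂ) • Pimat n m)).re)
      (∑ j, (Matrix.trace (B j * ∑ m ∈ Finset.range (n+1), (c m : ℂ) • Pimat n m)).re) := by
  rw [Mod2Pi, ← Real.Angle.angle_eq_iff_two_pi_dvd_sub, sum_smul_Pimat]
  exact angle_sum_re_trace_mul_diagonal_eq hAherm (fun j => (hAU1 j).isBlockDiagonal) hBherm
    (fun j => (hBU1 j).isBlockDiagonal) hprod (fun k => c k)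

/-- if two ordered products of exponentials of Hermitian U(1)-invariant
Hamiltonians agree, then the corresponding phases `∑_j Tr(A_j C)` agree mod 2π. -/
theorem stmt13 (n : ℕ) (hn : 1 ≤ n) (p q : ℕ)
    (A : Fin p → Matrix (Fin n → Bool) (Fin n → Bool) ℂ)
    (B : Fin q → Matrix (Fin n → Bool) (Fin n → Bool) ℂ)
    (hAherm : ∀ j, (A j).IsHermitian) (hAU1 : ∀ j, U1Invariant (A j))
    (hBherm : ∀ j, (B j).IsHermitian) (hBU1 : ∀ j, U1Invariant (B j))
    (hprod : (List.ofFn fun j => NormedSpace.exp ((-Complex.I) • A j)).prod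
           = (List.ofFn fun j => NormedSpace.exp ((-Complex.I) • B j)).prod)
    (c : ℕ → ℤ) :
    Mod2Pi
      (∑ j, (Matrix.trace (A j * ∑ m ∈ Finset.range (n+1), (c m : ℂ) • Pimat n m)).re)
      (∑ j, (Matrix.trace (B j * ∑ m ∈ Finset.range (n+1), (c m : ℂ) • Pimat n m)).re) :=
  stmt13_general n p q A B hAherm hAU1 hBherm hBU1 hprod c
end
end

section
/- Let n ≥ 1, let S ⊆ Fin n, let M be a complex matrix supported on S, and let l satisfy |S| < l ≤ n. Then Tr(M · C_l) = 0. -/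
open Finset Matrix

noncomputable section

/-- The sign `(-1)^{z i}` of a bit. -/
def sgn (b : Bool) : ℂ := if b = true then -1 else 1

/-- The operator `C_l`: the diagonal matrix with entry
`∑_{S ⊆ Fin n, |S| = l} ∏_{i ∈ S} (-1)^{z i}`. -/
def Cmat (n l : ℕ) : Matrix (Fin n → Bool) (Fin n → Bool) ℂ :=
  Matrix.diagonal fun z => ∑ S ∈ Finset.powersetCard l (Finset.univ : Finset (Fin n)),
    ∏ i ∈ S, sgn (z i)

/-- A matrix `M` is supported on `S ⊆ Fin n` if it acts only on the qubits in `S`. -/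
def SupportedOn {n : ℕ} (S : Finset (Fin n)) (M : Matrix (Fin n → Bool) (Fin n → Bool) ℂ) : Prop :=
  ∃ f : ({ i // i ∈ S } → Bool) → ({ i // i ∈ S } → Bool) → ℂ,
    ∀ z z' : Fin n → Bool,
      M z z' = if ∀ i ∉ S, z i = z' i then f (fun i => z i.1) (fun i => z' i.1) else 0

lemma sgn_not (b : Bool) : sgn (!b) = - sgn b := by
  cases b <;> simp [sgn]

/-- if `M` is supported on `S` and `|S| < l ≤ n`, then `Tr(M C_l) = 0`. -/
theorem stmt15 (n l : ℕ) (hn : 1 ≤ n) (S : Finset (Fin n))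
    (M : Matrix (Fin n → Bool) (Fin n → Bool) ℂ) (hM : SupportedOn S M)
    (hSl : S.card < l) (hl : l ≤ n) :
    Matrix.trace (M * Cmat n l) = 0 := by
  obtain ⟨f, hf⟩ := hM
  have htr : Matrix.trace (M * Cmat n l)
      = ∑ z : Fin n → Bool, M z z *
        ∑ T ∈ Finset.powersetCard l (Finset.univ : Finset (Fin n)), ∏ i ∈ T, sgn (z i) := by
    simp [Matrix.trace, Cmat, Matrix.mul_diagonal, Matrix.diag]
  rw [htr]
  have : ∀ z : Fin n → Bool, M z z *
      ∑ T ∈ Finset.powersetCard l (Finset.univ : Finset (Fin n)), ∏ i ∈ T, sgn (z i)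
      = ∑ T ∈ Finset.powersetCard l (Finset.univ : Finset (Fin n)),
          M z z * ∏ i ∈ T, sgn (z i) := fun z => Finset.mul_sum _ _ _
  simp_rw [this]
  rw [Finset.sum_comm]
  apply Finset.sum_eq_zero
  intro T hT
  have hTcard : T.card = l := (Finset.mem_powersetCard.mp hT).2
  have hTS : ¬ T ⊆ S := by
    intro h
    exact absurd (Finset.card_le_card h) (by omega)
  obtain ⟨i0, hi0T, hi0S⟩ := Finset.not_subset.mp hTS
  apply Finset.sum_involution (fun z _ => Function.update z i0 (!z i0))
  · intro z _
    have hMz : M (Function.update z i0 (!z i0)) (Function.update z i0 (!z i0)) = M z z := by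
      rw [hf, hf]
      simp only [if_pos (fun i _ => rfl)]
      have harg : (fun i : { i // i ∈ S } => Function.update z i0 (!z i0) i.1)
          = fun i => z i.1 :=
        funext fun i => Function.update_of_ne (fun h : i.1 = i0 => hi0S (h ▸ i.2)) _ _
      rw [harg]
    rw [hMz, ← Finset.mul_prod_erase T _ hi0T,
        ← Finset.mul_prod_erase T (fun i => sgn (Function.update z i0 (!z i0) i)) hi0T]
    have hrest : ∏ i ∈ T.erase i0, sgn (Function.update z i0 (!z i0) i)
        = ∏ i ∈ T.erase i0, sgn (z i) := by
      apply Finset.prod_congr rfl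
      intro i hi
      rw [Function.update_of_ne (Finset.ne_of_mem_erase hi)]
    rw [hrest, Function.update_self, sgn_not]
    ring
  · intro z _ _
    intro h
    have := congrFun h i0
    simp [Function.update_self] at this
  · intro z _
    funext j
    by_cases hj : j = i0
    · subst hj; simp
    · simp [Function.update_of_ne hj]
  · intro z _
    exact Finset.mem_univ _
end
end
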